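/- arXiv:0811.1879 — 8 statements merged into one kernel-verified Lean document; each statement's English description precedes it below -/
import Mathlib

section
/- Let p be a prime number and let a and k be positive integers. The function j \mapsto \binom{j}{k} mod p^a, defined for j \geq k, is periodic, and its minimal period is exactly p^{a+e}, where e = \lfloor \log_p k \rfloor; that is, \binom{j+p^{a+e}}{k} \equiv \binom{j}{k} (mod p^a) for all j \geq k, and p^{a+e} is the least positive integer with this property. -/
/-!
By Vandermonde, `(j + p^(a+e)).choose k` is `j.choose k` plus the terms
`(p^(a+e)).choose i * j.choose (k - i)` with `0 < i ≤ k < p^(e+1)`; since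
`v_p ((p^m).choose i) = m - v_p i` and `v_p i ≤ e`, all of them vanish mod `p^a`, so `p^(a+e)` is a
period. Periods on `j ≥ k` are closed under `gcd`, so a smaller positive period would make
`p^(a+e-1)` a period. It is not one: it sends `j = k - p^e` (moved into the domain by the period
`p^(a+e)`), where `j.choose k = 0`, to `k + (p^(a+e-1) - p^e)`, and adding `k` and
`p^(a+e-1) - p^e` in base `p` produces only `a - 1` carries, so by Kummer
`(k + (p^(a+e-1) - p^e)).choose k` is not divisible by `p^a`.
-/

open Nat Finset

def PeriodicFrom {α : Type*} (f : ℕ → α) (N c : ℕ) : Prop :=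
  ∀ j, N ≤ j → f (j + c) = f j

namespace PeriodicFrom

variable {α : Type*} {f : ℕ → α} {N c d : ℕ}

theorem add (hc : PeriodicFrom f N c) (hd : PeriodicFrom f N d) : PeriodicFrom f N (c + d) :=
  fun j hj => by rw [← add_assoc, hd (j + c) (le_add_right_of_le hj), hc j hj]

theorem nat_mul (hc : PeriodicFrom f N c) : ∀ t : ℕ, PeriodicFrom f N (t * c)
  | 0 => fun j _ => by rw [zero_mul, add_zero]
  | t + 1 => by rw [succ_mul]; exact (hc.nat_mul t).add hc

theorem mod (hc : PeriodicFrom f N c) (hd : PeriodicFrom f N d) : PeriodicFrom f N (d % c) :=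
  fun j hj => by
    rw [← hc.nat_mul (d / c) (j + d % c) (le_add_right_of_le hj), add_assoc, Nat.mod_add_div',
      hd j hj]

theorem gcd (hc : PeriodicFrom f N c) (hd : PeriodicFrom f N d) :
    PeriodicFrom f N (Nat.gcd c d) := by
  induction c, d using Nat.gcd.induction with
  | H0 d => rwa [Nat.gcd_zero_left]
  | H1 c d _ ih => rw [Nat.gcd_rec]; exact ih (hc.mod hd) hc

theorem pow_succ_dvd {p n P : ℕ} (hp : p.Prime) (hn : PeriodicFrom f N (p ^ (n + 1)))
    (hn' : ¬ PeriodicFrom f N (p ^ n)) (hP : PeriodicFrom f N P) : p ^ (n + 1) ∣ P := by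
  obtain ⟨t, ht, hg⟩ := (Nat.dvd_prime_pow hp).1 (Nat.gcd_dvd_left (p ^ (n + 1)) P)
  obtain rfl | ht : t = n + 1 ∨ t ≤ n := by omega
  · exact hg ▸ Nat.gcd_dvd_right _ _
  · refine absurd ?_ hn'
    have := (hn.gcd hP).nat_mul (p ^ (n - t))
    rwa [hg, ← pow_add, Nat.sub_add_cancel ht] at this

end PeriodicFrom

theorem factorization_le_of_lt_pow_succ {p i e : ℕ} (hp : p.Prime) (hi : i < p ^ (e + 1)) :
    i.factorization p ≤ e := by
  rcases eq_or_ne i 0 with rfl | hi0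
  · simp
  · exact Nat.lt_add_one_iff.1 ((Nat.pow_lt_pow_iff_right hp.one_lt).1 ((ordProj_le p hi0).trans_lt hi))

theorem pow_sub_factorization_dvd_choose_prime_pow {p m i : ℕ} (hp : p.Prime) (hi : i ≠ 0) :
    p ^ (m - i.factorization p) ∣ (p ^ m).choose i := by
  rcases le_or_gt i (p ^ m) with him | him
  · rw [hp.pow_dvd_iff_le_factorization (choose_pos him).ne',
      factorization_choose_prime_pow hp him hi]
  · simp [choose_eq_zero_of_lt him]

theorem choose_add_prime_pow_modEq {p k e : ℕ} (hp : p.Prime) (hk : k < p ^ (e + 1)) (a j : ℕ) :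
    (j + p ^ (a + e)).choose k ≡ j.choose k [MOD p ^ a] := by
  have hdvd : p ^ a ∣ ∑ i ∈ range k, (p ^ (a + e)).choose (i + 1) * j.choose (k - (i + 1)) := by
    refine dvd_sum fun i hi => Dvd.dvd.mul_right ?_ _
    refine (pow_dvd_pow p ?_).trans (pow_sub_factorization_dvd_choose_prime_pow hp i.succ_ne_zero)
    have := factorization_le_of_lt_pow_succ hp ((show i + 1 ≤ k from mem_range.1 hi).trans_lt hk)
    omega
  rw [add_comm j, add_choose_eq, Nat.sum_antidiagonal_eq_sum_range_succ_mk, sum_range_succ']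
  simpa using (Nat.modEq_zero_iff_dvd.2 hdvd).add_right (j.choose k)

theorem not_pow_succ_dvd_choose {p k e : ℕ} (hp : p.Prime) (hek : p ^ e ≤ k)
    (hk : k < p ^ (e + 1)) (b : ℕ) : ¬ p ^ (b + 1) ∣ (p ^ (b + e) - p ^ e + k).choose k := by
  set n := p ^ (b + e) - p ^ e
  have hn : n + k < p ^ (b + e + 1) := by
    have hle : p ^ e ≤ p ^ (b + e) := Nat.pow_le_pow_right hp.pos (by omega)
    have hsum : n + p ^ e = p ^ (b + e) := Nat.sub_add_cancel hle
    have := hp.two_le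
    rw [pow_succ] at hk ⊢
    nlinarith
  have hcarries : {i ∈ Ico 1 (b + e + 1) | p ^ i ≤ k % p ^ i + n % p ^ i} ⊆
      Ico (e + 1) (b + e + 1) := by
    intro i hi
    simp only [mem_filter, mem_Ico] at hi ⊢
    refine ⟨?_, hi.1.2⟩
    by_contra hie
    have hn0 : n % p ^ i = 0 :=
      mod_eq_zero_of_dvd (Nat.dvd_sub (pow_dvd_pow p (by omega)) (pow_dvd_pow p (by omega)))
    have := mod_lt k (pow_pos hp.pos i)
    omega
  rw [hp.pow_dvd_iff_le_factorization (choose_pos (le_add_left k n)).ne',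
    factorization_choose' hp (log_lt_of_lt_pow (by have := pow_pos hp.pos e; omega) hn)]
  have := card_le_card hcarries
  simp only [card_Ico] at this
  omega

theorem not_periodicFrom_choose_mod {p k e : ℕ} (hp : p.Prime) (hek : p ^ e ≤ k)
    (hk : k < p ^ (e + 1)) (b : ℕ) :
    ¬ PeriodicFrom (fun j => j.choose k % p ^ (b + 1)) k (p ^ (b + e)) := by
  intro h
  have hN := choose_add_prime_pow_modEq hp hk (b + 1)
  have hpos : 0 < p ^ e := pow_pos hp.pos e
  have hle : p ^ e ≤ p ^ (b + 1 + e) := Nat.pow_le_pow_right hp.pos (by omega)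
  have hle' : p ^ e ≤ p ^ (b + e) := Nat.pow_le_pow_right hp.pos (by omega)
  have hshift := h (k - p ^ e + p ^ (b + 1 + e)) (by omega)
  rw [add_right_comm] at hshift
  have hzero : (p ^ (b + e) - p ^ e + k).choose k ≡ 0 [MOD p ^ (b + 1)] :=
    calc (p ^ (b + e) - p ^ e + k).choose k
        = (k - p ^ e + p ^ (b + e)).choose k := by congr 1; omega
      _ ≡ (k - p ^ e + p ^ (b + e) + p ^ (b + 1 + e)).choose k [MOD p ^ (b + 1)] := (hN _).symm
      _ ≡ (k - p ^ e + p ^ (b + 1 + e)).choose k [MOD p ^ (b + 1)] := hshift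
      _ ≡ (k - p ^ e).choose k [MOD p ^ (b + 1)] := hN _
      _ = 0 := choose_eq_zero_of_lt (by omega)
  exact not_pow_succ_dvd_choose hp hek hk b (Nat.modEq_zero_iff_dvd.1 hzero)

theorem stmt_3 (p a k : ℕ) (hp : p.Prime) (ha : 0 < a) (hk : 0 < k) :
    (∀ j : ℕ, k ≤ j →
      Nat.choose (j + p ^ (a + Nat.log p k)) k ≡ Nat.choose j k [MOD p ^ a]) ∧
    (∀ P : ℕ, 0 < P →
      (∀ j : ℕ, k ≤ j → Nat.choose (j + P) k ≡ Nat.choose j k [MOD p ^ a]) →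
      p ^ (a + Nat.log p k) ≤ P) := by
  obtain ⟨b, rfl⟩ : ∃ b, a = b + 1 := ⟨a - 1, by omega⟩
  have hek : p ^ Nat.log p k ≤ k := pow_log_le_self p hk.ne'
  have hke : k < p ^ (Nat.log p k + 1) := lt_pow_succ_log_self hp.one_lt k
  have hperiod := choose_add_prime_pow_modEq hp hke (b + 1)
  refine ⟨fun j _ => hperiod j, fun P hP0 hP => le_of_dvd hP0 ?_⟩
  rw [show b + 1 + Nat.log p k = b + Nat.log p k + 1 by omega] at hperiod ⊢
  exact PeriodicFrom.pow_succ_dvd (f := fun j => j.choose k % p ^ (b + 1)) hp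
    (fun j _ => hperiod j) (not_periodicFrom_choose_mod hp hek hke b) hP
end

section
/- Let d be a prime and let a_j = \sum_{i=0}^{\lfloor j/d \rfloor} \binom{j-(d-1)i}{i}. Then a_{j + d^2 - 1} \equiv a_j (mod d) for all j \geq 0; that is, the period of (a_j mod d) divides d^2 - 1. -/
/-- The binomial sum sequence `a_j = ∑_{i=0}^{⌊j/d⌋} C(j - (d-1)i, i)`. -/
def binSum (d j : ℕ) : ℕ :=
  ∑ i ∈ Finset.range (j / d + 1), Nat.choose (j - (d - 1) * i) i

lemma lucas2 {p : ℕ} [hpf : Fact p.Prime] (a b c e : ℕ) (hb : b < p) (he : e < p) :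
    (p * a + b).choose (p * c + e) ≡ b.choose e * a.choose c [MOD p] := by
  have hp : 0 < p := hpf.out.pos
  have h := @Choose.choose_modEq_choose_mod_mul_choose_div_nat (p * a + b) (p * c + e) p _
  rwa [Nat.mul_add_mod, Nat.mul_add_mod,
    Nat.mul_add_div hp, Nat.mul_add_div hp, Nat.mod_eq_of_lt hb, Nat.mod_eq_of_lt he,
    Nat.div_eq_of_lt hb, Nat.div_eq_of_lt he, Nat.add_zero, Nat.add_zero] at h

lemma lucas2' {p : ℕ} [Fact p.Prime] (a b c e : ℕ) (hb : b < p) (he : e < p) :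
    (((p * a + b).choose (p * c + e) : ℕ) : ZMod p)
      = ((b.choose e : ℕ) : ZMod p) * ((a.choose c : ℕ) : ZMod p) := by
  have h := (ZMod.natCast_eq_natCast_iff _ _ _).mpr (lucas2 a b c e hb he)
  push_cast at h ⊢; exact h

lemma binSum_rec (c n : ℕ) (hc : 1 ≤ c) :
    binSum (c + 1) (n + (c + 1)) = binSum (c + 1) (n + c) + binSum (c + 1) n := by
  have hd : 0 < c + 1 := Nat.succ_pos c
  have hsub : (c + 1) - 1 = c := rfl
  unfold binSum
  rw [hsub, Nat.add_div_right n hd]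
  set q := n / (c + 1) with hq
  set K := (n + c) / (c + 1) with hK
  -- LHS
  rw [Finset.sum_range_succ' (fun i => Nat.choose (n + (c+1) - c * i) i) (q + 1)]
  have hL : ∀ i ∈ Finset.range (q + 1),
      Nat.choose (n + (c+1) - c * (i+1)) (i+1)
        = Nat.choose (n - c*i) i + Nat.choose (n - c*i) (i+1) := by
    intro i hi
    rw [Finset.mem_range] at hi
    have h1 : i ≤ q := by omega
    have h2 : i * (c + 1) ≤ n := (Nat.le_div_iff_mul_le hd).mp h1
    have h3 : c * (i + 1) = c * i + c := by ring
    have h4 : i * (c + 1) = c * i + i := by ring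
    have h5 : n + (c + 1) - c * (i + 1) = (n - c * i) + 1 := by omega
    rw [h5, Nat.choose_succ_succ']
  rw [Finset.sum_congr rfl hL, Finset.sum_add_distrib]
  -- RHS first summand
  rw [Finset.sum_range_succ' (fun i => Nat.choose (n + c - c * i) i) K]
  have hR : ∀ i ∈ Finset.range K,
      Nat.choose (n + c - c * (i+1)) (i+1) = Nat.choose (n - c*i) (i+1) := by
    intro i hi
    rw [Finset.mem_range] at hi
    have h1 : i + 1 ≤ K := hi
    have h2 : (i + 1) * (c + 1) ≤ n + c := (Nat.le_div_iff_mul_le hd).mp h1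
    have h3 : c * (i + 1) = c * i + c := by ring
    have h4 : (i + 1) * (c + 1) = c * i + c + i + 1 := by ring
    have h5 : n + c - c * (i + 1) = n - c * i := by omega
    rw [h5]
  rw [Finset.sum_congr rfl hR]
  -- match the two extra sums
  have hKq : K ≤ q + 1 := by
    rw [hK, hq]
    calc (n + c) / (c + 1) ≤ (n + (c+1)) / (c+1) := Nat.div_le_div_right (by omega)
      _ = q + 1 := Nat.add_div_right n hd
  have hzero : ∀ i ∈ Finset.range (q + 1), i ∉ Finset.range K →
      Nat.choose (n - c * i) (i + 1) = 0 := by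
    intro i hi hni
    rw [Finset.mem_range] at hi hni
    have h1 : K < i + 1 := by omega
    have h2 : n + c < (i + 1) * (c + 1) := (Nat.div_lt_iff_lt_mul hd).mp (by omega)
    have h4 : (i + 1) * (c + 1) = c * i + c + i + 1 := by ring
    exact Nat.choose_eq_zero_of_lt (by omega)
  rw [Finset.sum_subset (Finset.range_subset_range.mpr hKq) hzero]
  simp [Nat.choose_zero_right]
  omega

lemma base0 (d : ℕ) (hd : d.Prime) : ((binSum d (d ^ 2 - 1) : ℕ) : ZMod d) = 1 := by
  haveI : Fact d.Prime := ⟨hd⟩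
  have hd2 : 2 ≤ d := hd.two_le
  have hd0 : 0 < d := by omega
  have hsq : 1 ≤ d ^ 2 := Nat.one_le_pow _ _ hd0
  have hrange : (d ^ 2 - 1) / d + 1 = (d - 1) + 1 := by
    have h1 : d ^ 2 - 1 = d * (d - 1) + (d - 1) := by
      zify [hsq, show 1 ≤ d by omega]; ring
    rw [h1, Nat.mul_add_div hd0, Nat.div_eq_of_lt (by omega), Nat.add_zero]
  unfold binSum
  rw [hrange, Nat.cast_sum, Finset.sum_range_succ' (fun i => ((Nat.choose (d^2-1 - (d-1)*i) i : ℕ) : ZMod d)) (d-1)]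
  have hz : ∀ i ∈ Finset.range (d - 1),
      ((Nat.choose (d^2-1 - (d-1)*(i+1)) (i+1) : ℕ) : ZMod d) = 0 := by
    intro i hi
    rw [Finset.mem_range] at hi
    have hdd : (d - 1) * d + d = d ^ 2 := by zify [show 1 ≤ d by omega]; ring
    have hle : (d - 1) * (i + 1) ≤ (d - 1) * d := Nat.mul_le_mul_left _ (by omega)
    have heq : d ^ 2 - 1 - (d - 1) * (i + 1) = d * (d - (i + 1)) + i := by
      zify [hsq, show (d-1)*(i+1) ≤ d^2 - 1 by omega, show 1 ≤ d by omega,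
        show i + 1 ≤ d by omega]
      ring
    have heq2 : i + 1 = d * 0 + (i + 1) := by ring
    rw [heq, heq2, lucas2' _ _ _ _ (by omega) (by omega)]
    rw [Nat.choose_eq_zero_of_lt (by omega)]
    simp
  rw [Finset.sum_congr rfl hz]
  simp

lemma base1 (d j : ℕ) (hd : d.Prime) (hj1 : 1 ≤ j) (hjd : j < d) :
    ((binSum d (d ^ 2 - 1 + j) : ℕ) : ZMod d) = 1 := by
  haveI : Fact d.Prime := ⟨hd⟩
  have hd2 : 2 ≤ d := hd.two_le
  have hd0 : 0 < d := by omega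
  have hsq : 1 ≤ d ^ 2 := Nat.one_le_pow _ _ hd0
  have hdd : (d - 1) * d + d = d ^ 2 := by zify [show 1 ≤ d by omega]; ring
  have hrange : (d ^ 2 - 1 + j) / d + 1 = d + 1 := by
    have h1 : d ^ 2 - 1 + j = d * d + (j - 1) := by
      zify [hsq, hj1]; ring
    rw [h1, Nat.mul_add_div hd0, Nat.div_eq_of_lt (by omega), Nat.add_zero]
  unfold binSum
  rw [hrange, Nat.cast_sum]
  set F : ℕ → ZMod d := fun i => ((Nat.choose (d^2-1+j - (d-1)*i) i : ℕ) : ZMod d) with hF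
  -- peel i = d
  rw [Finset.sum_range_succ F d]
  have hFd : F d = 1 := by
    have heq : d ^ 2 - 1 + j - (d - 1) * d = d * 1 + (j - 1) := by
      zify [hsq, show (d-1)*d ≤ d^2 - 1 + j by omega, show 1 ≤ d by omega, hj1]; ring
    have h := lucas2' (p := d) 1 (j - 1) 1 0 (by omega) (by omega)
    simp only [Nat.choose_zero_right, Nat.choose_self, Nat.cast_one, mul_one, one_mul] at h
    show ((Nat.choose (d^2-1+j - (d-1)*d) d : ℕ) : ZMod d) = 1
    rw [heq]
    simpa using h
  -- peel i = 0
  have hr2 : Finset.range d = Finset.range ((d - 1) + 1) := by congr 1; omega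
  rw [hFd, hr2, Finset.sum_range_succ' F (d - 1)]
  have hF0 : F 0 = 1 := by rw [hF]; simp
  rw [hF0]
  -- middle terms
  have hmid : ∀ i ∈ Finset.range (d - 1),
      F (i + 1) = if i < d - j then (((j + i).choose (i+1) : ℕ) : ZMod d) else 0 := by
    intro i hi
    rw [Finset.mem_range] at hi
    have hle : (d - 1) * (i + 1) ≤ (d - 1) * d := Nat.mul_le_mul_left _ (by omega)
    rw [hF]; simp only
    by_cases hcase : i < d - j
    · have heq : d ^ 2 - 1 + j - (d - 1) * (i + 1) = d * (d - (i + 1)) + (j + i) := by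
        zify [hsq, show (d-1)*(i+1) ≤ d^2 - 1 + j by omega, show 1 ≤ d by omega,
          show i + 1 ≤ d by omega]
        ring
      have h := lucas2' (p := d) (d - (i + 1)) (j + i) 0 (i + 1) (by omega) (by omega)
      simp only [Nat.mul_zero, Nat.zero_add, Nat.choose_zero_right, Nat.cast_one, mul_one] at h
      rw [heq, if_pos hcase]
      exact h
    · have heq : d ^ 2 - 1 + j - (d - 1) * (i + 1) = d * (d - i) + (j + i - d) := by
        zify [hsq, show (d-1)*(i+1) ≤ d^2 - 1 + j by omega, show 1 ≤ d by omega,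
          show i ≤ d by omega, show d ≤ j + i by omega]
        ring
      have h := lucas2' (p := d) (d - i) (j + i - d) 0 (i + 1) (by omega) (by omega)
      simp only [Nat.mul_zero, Nat.zero_add] at h
      rw [heq, if_neg hcase, h, Nat.choose_eq_zero_of_lt (by omega)]
      simp
  rw [Finset.sum_congr rfl hmid]
  -- collapse ite sum to range (d - j)
  rw [← Finset.sum_subset (Finset.range_subset_range.mpr (show d - j ≤ d - 1 by omega))
      (fun i _ hni => by rw [Finset.mem_range] at hni; rw [if_neg (by omega)])]
  have hcongr : ∀ i ∈ Finset.range (d - j),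
      (if i < d - j then (((j + i).choose (i+1) : ℕ) : ZMod d) else 0)
        = (((j + i).choose (i+1) : ℕ) : ZMod d) := by
    intro i hi; rw [Finset.mem_range] at hi; rw [if_pos hi]
  rw [Finset.sum_congr rfl hcongr, ← Nat.cast_sum]
  -- hockey stick in ℕ
  have hock : ∑ i ∈ Finset.range (d - j + 1), (i + (j - 1)).choose (j - 1) = d.choose j := by
    rw [Nat.sum_range_add_choose]; congr 1 <;> omega
  have hpeel : ∑ i ∈ Finset.range (d - j + 1), (i + (j - 1)).choose (j - 1)
      = (∑ i ∈ Finset.range (d - j), ((i + 1) + (j - 1)).choose (j - 1))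
        + (0 + (j - 1)).choose (j - 1) := Finset.sum_range_succ' _ _
  have hterm : ∀ i ∈ Finset.range (d - j),
      ((i + 1) + (j - 1)).choose (j - 1) = (j + i).choose (i + 1) := by
    intro i hi
    have h1 : (i + 1) + (j - 1) = j + i := by omega
    have h2 : j - 1 = (j + i) - (i + 1) := by omega
    rw [h1, h2, Nat.choose_symm (by omega)]
  rw [Finset.sum_congr rfl hterm] at hpeel
  have hS : (∑ i ∈ Finset.range (d - j), (j + i).choose (i + 1)) + 1 = d.choose j := by
    rw [← hock, hpeel]; simp
  have hdvd : (d.choose j : ZMod d) = 0 :=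
    (ZMod.natCast_eq_zero_iff _ _).mpr (hd.dvd_choose_self (by omega) hjd)
  have := congrArg (fun n : ℕ => (n : ZMod d)) hS
  push_cast at this
  rw [hdvd] at this
  -- this : (∑ ... : ZMod d) + 1 = 0
  have hsum : ((∑ i ∈ Finset.range (d - j), (j + i).choose (i + 1) : ℕ) : ZMod d) = -1 := by
    push_cast
    linear_combination this
  rw [hsum]; ring

lemma binSum_small {d j : ℕ} (h : j < d) : binSum d j = 1 := by
  simp [binSum, Nat.div_eq_of_lt h]

lemma binSum_rec' (d n : ℕ) (hd : 2 ≤ d) :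
    binSum d (n + d) = binSum d (n + (d - 1)) + binSum d n := by
  obtain ⟨c, rfl⟩ : ∃ c, d = c + 1 := ⟨d - 1, by omega⟩
  simpa using binSum_rec c n (by omega)

lemma base (d j : ℕ) (hd : d.Prime) (hjd : j < d) :
    ((binSum d (d ^ 2 - 1 + j) : ℕ) : ZMod d) = 1 := by
  rcases Nat.eq_zero_or_pos j with rfl | hj1
  · simpa using base0 d hd
  · exact base1 d j hd hj1 hjd

theorem stmt_5 (d : ℕ) (hd : d.Prime) :
    ∀ j : ℕ, binSum d (j + (d ^ 2 - 1)) ≡ binSum d j [MOD d] := by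
  have hd2 : 2 ≤ d := hd.two_le
  intro j
  rw [← ZMod.natCast_eq_natCast_iff]
  induction j using Nat.strong_induction_on with
  | _ j ih =>
    rcases Nat.lt_or_ge j d with hjd | hjd
    · rw [show j + (d ^ 2 - 1) = d ^ 2 - 1 + j by omega, base d j hd hjd, binSum_small hjd]
      norm_num
    · obtain ⟨n, rfl⟩ : ∃ n, j = n + d := ⟨j - d, by omega⟩
      have e1 : n + d + (d ^ 2 - 1) = (n + (d ^ 2 - 1)) + d := by omega
      have e2 : (n + (d ^ 2 - 1)) + (d - 1) = (n + (d - 1)) + (d ^ 2 - 1) := by omega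
      rw [e1, binSum_rec' d (n + (d ^ 2 - 1)) hd2, binSum_rec' d n hd2]
      push_cast
      rw [e2, ih (n + (d - 1)) (by omega), ih n (by omega)]
end

section
/- Let d be a prime and let a_j = \sum_{i=0}^{\lfloor j/d \rfloor} \binom{j-(d-1)i}{i}. Then a_{d^2 - d + j} \equiv 0 (mod d) for j = 0, 1, \dots, d-2, and a_{d^2 - 1} \equiv 1 (mod d). -/
lemma binSum_key (p j : ℕ) (hp : p.Prime) (hj : j < p) :
    binSum p (p ^ 2 - p + j) ≡ p.choose (j + 1) [MOD p] := by
  haveI : Fact p.Prime := ⟨hp⟩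
  have hp2 : 2 ≤ p := hp.two_le
  have h1 : p ^ 2 - p + j = p * (p - 1) + j := by
    rw [pow_two, Nat.mul_sub, Nat.mul_one]
  have hdiv : (p * (p - 1) + j) / p = p - 1 := by
    rw [Nat.mul_add_div (by omega), Nat.div_eq_of_lt hj, Nat.add_zero]
  rw [← ZMod.natCast_eq_natCast_iff]
  have hterm : ∀ b ∈ Finset.range p,
      ((Nat.choose (p * (p - 1) + j - (p - 1) * b) b : ℕ) : ZMod p)
        = ((Nat.choose ((b + j) % p) b : ℕ) : ZMod p) := by
    intro b hb
    rw [Finset.mem_range] at hb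
    have hb' : b ≤ p - 1 := by omega
    have harg : p * (p - 1) + j - (p - 1) * b = p * (p - 1 - b) + (b + j) := by
      have h2 : (p - 1) * b ≤ p * (p - 1) + j := by nlinarith
      zify [hb', h2, hp.one_le]
      ring
    rw [harg]
    have lucas := (ZMod.natCast_eq_natCast_iff _ _ p).mpr
      (Choose.choose_modEq_choose_mod_mul_choose_div_nat
        (p := p) (n := p * (p - 1 - b) + (b + j)) (k := b))
    rw [lucas, Nat.mul_add_mod, Nat.mod_eq_of_lt hb, Nat.mul_add_div (by omega),
      Nat.div_eq_of_lt hb, Nat.choose_zero_right, Nat.mul_one]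
  have hsum : ∑ b ∈ Finset.range p, Nat.choose ((b + j) % p) b = p.choose (j + 1) := by
    have hsub : Finset.range (p - j) ⊆ Finset.range p := Finset.range_subset_range.mpr (by omega)
    have hzero : ∀ b ∈ Finset.range p, b ∉ Finset.range (p - j) →
        Nat.choose ((b + j) % p) b = 0 := by
      intro b hb hnb
      rw [Finset.mem_range] at hb
      rw [Finset.mem_range, not_lt] at hnb
      have hge : p ≤ b + j := by omega
      rw [Nat.mod_eq_sub_mod hge, Nat.mod_eq_of_lt (by omega)]
      exact Nat.choose_eq_zero_of_lt (by omega)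
    rw [← Finset.sum_subset hsub hzero]
    have hcongr : ∀ b ∈ Finset.range (p - j), Nat.choose ((b + j) % p) b
        = Nat.choose (b + j) j := by
      intro b hb
      rw [Finset.mem_range] at hb
      rw [Nat.mod_eq_of_lt (by omega)]
      have := Nat.choose_symm (show j ≤ b + j by omega)
      simpa using this
    rw [Finset.sum_congr rfl hcongr, show p - j = (p - 1 - j) + 1 by omega,
      Nat.sum_range_add_choose]
    congr 1
    omega
  calc ((binSum p (p ^ 2 - p + j) : ℕ) : ZMod p)
      = ∑ b ∈ Finset.range p,
          ((Nat.choose (p * (p - 1) + j - (p - 1) * b) b : ℕ) : ZMod p) := by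
        rw [binSum, h1, hdiv, Nat.sub_add_cancel hp.one_le, Nat.cast_sum]
    _ = ∑ b ∈ Finset.range p, ((Nat.choose ((b + j) % p) b : ℕ) : ZMod p) :=
        Finset.sum_congr rfl hterm
    _ = ((∑ b ∈ Finset.range p, Nat.choose ((b + j) % p) b : ℕ) : ZMod p) := by
        rw [Nat.cast_sum]
    _ = _ := by rw [hsum]

theorem stmt_6 (d : ℕ) (hd : d.Prime) :
    (∀ j : ℕ, j ≤ d - 2 → binSum d (d ^ 2 - d + j) ≡ 0 [MOD d]) ∧
    binSum d (d ^ 2 - 1) ≡ 1 [MOD d] := by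
  have hd2 := hd.two_le
  constructor
  · intro j hj
    have h := binSum_key d j hd (by omega)
    have hz : d.choose (j + 1) ≡ 0 [MOD d] :=
      (Nat.modEq_zero_iff_dvd).mpr (hd.dvd_choose_self (by omega) (by omega))
    exact h.trans hz
  · have h := binSum_key d (d - 1) hd (by omega)
    have he : d ^ 2 - d + (d - 1) = d ^ 2 - 1 := by
      have : d ≤ d ^ 2 := Nat.le_self_pow two_ne_zero d
      omega
    rw [he, show d - 1 + 1 = d by omega, Nat.choose_self] at h
    exact h
end

section
/- Let d be a prime and let a_j = \sum_{i=0}^{\lfloor j/d \rfloor} \binom{j-(d-1)i}{i}. Then for every l with 0 \leq l \leq d-1, one has a_{ld} \equiv l+1 (mod d). -/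
theorem stmt_7 (d : ℕ) (hd : d.Prime) :
    ∀ l : ℕ, l ≤ d - 1 → binSum d (l * d) ≡ l + 1 [MOD d] := by
  intro l hl
  have hdpos : 0 < d := hd.pos
  have : Fact d.Prime := ⟨hd⟩
  have hl' : l < d := lt_of_le_of_lt hl (Nat.sub_lt hdpos one_pos)
  unfold binSum
  rw [Nat.mul_div_cancel _ hdpos]
  have key : ∀ i ∈ Finset.range (l + 1),
      Nat.choose (l * d - (d - 1) * i) i ≡ 1 [MOD d] := by
    intro i hi
    rw [Finset.mem_range] at hi
    have hil : i ≤ l := Nat.lt_succ_iff.mp hi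
    have hid : i < d := lt_of_le_of_lt hil hl'
    have hle : (d - 1) * i ≤ l * d := by
      calc (d - 1) * i ≤ d * l := Nat.mul_le_mul (Nat.sub_le d 1) hil
        _ = l * d := mul_comm d l
    have hn : l * d - (d - 1) * i = i + (l - i) * d := by
      zify [hle, hil, hdpos]
      ring
    rw [hn]
    have := Choose.choose_modEq_choose_mod_mul_choose_div_nat
      (p := d) (n := i + (l - i) * d) (k := i)
    rw [Nat.add_mul_div_right _ _ hdpos, Nat.add_mul_mod_self_right,
      Nat.mod_eq_of_lt hid, Nat.div_eq_of_lt hid] at this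
    simpa using this
  rw [← ZMod.natCast_eq_natCast_iff]
  push_cast
  rw [Finset.sum_congr rfl (fun i hi => (ZMod.natCast_eq_natCast_iff _ _ _).mpr (key i hi))]
  simp
end

section
/- Let a_j = \sum_{i=0}^{\lfloor j/4 \rfloor} \binom{j-3i}{i}. Then the minimal period of the sequence (a_j mod 4) is 30 = 2(2^4 - 1). -/
/-- The set of (not necessarily minimal) positive periods of the sequence
`(binSum d j) mod m`. -/
def periodSet (d m : ℕ) : Set ℕ :=
  {P | 0 < P ∧ ∀ j : ℕ, binSum d (j + P) ≡ binSum d j [MOD m]}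

lemma binSum_rec4 (j : ℕ) : binSum 4 (j + 4) = binSum 4 (j + 3) + binSum 4 j := by
  unfold binSum
  have hdiv : (j + 4) / 4 = j / 4 + 1 := by omega
  rw [hdiv, Finset.sum_range_succ']
  have hstep : ∀ i ∈ Finset.range (j / 4 + 1),
      (j + 4 - (4 - 1) * (i + 1)).choose (i + 1)
        = (j - (4 - 1) * i).choose i + (j - (4 - 1) * i).choose (i + 1) := by
    intro i hi
    simp only [Finset.mem_range] at hi
    have h3i : 3 * i ≤ j := by
      have := Nat.div_add_mod j 4
      omega
    have : j + 4 - (4 - 1) * (i + 1) = (j - (4 - 1) * i) + 1 := by omega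
    rw [this, Nat.choose_succ_succ]
  rw [Finset.sum_congr rfl hstep, Finset.sum_add_distrib]
  have hshift : ∑ i ∈ Finset.range (j / 4 + 1), (j - (4 - 1) * i).choose (i + 1)
      = ∑ i ∈ Finset.range (j / 4 + 1), (j + 3 - (4 - 1) * (i + 1)).choose (i + 1) := by
    apply Finset.sum_congr rfl
    intro i hi
    congr 1
    omega
  rw [hshift]
  have expand := Finset.sum_range_succ'
    (fun i => (j + 3 - (4 - 1) * i).choose i) (j / 4 + 1)
  have key : ∑ i ∈ Finset.range ((j + 3) / 4 + 1), (j + 3 - (4 - 1) * i).choose i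
      = ∑ i ∈ Finset.range (j / 4 + 1), (j + 3 - (4 - 1) * (i + 1)).choose (i + 1)
        + (j + 3 - (4 - 1) * 0).choose 0 := by
    rcases Nat.lt_or_ge (j % 4) 1 with hr | hr
    · -- j % 4 = 0, so (j+3)/4 = j/4 and the extra term is zero
      have h1 : (j + 3) / 4 = j / 4 := by omega
      rw [h1, ← expand, Finset.sum_range_succ _ (j / 4 + 1)]
      have hz : (j + 3 - (4 - 1) * (j / 4 + 1)).choose (j / 4 + 1) = 0 := by
        apply Nat.choose_eq_zero_of_lt
        omega
      rw [hz]
      simp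
    · have h1 : (j + 3) / 4 = j / 4 + 1 := by omega
      rw [h1, ← expand]
  rw [key]
  simp only [Nat.mul_zero, Nat.sub_zero, Nat.choose_zero_right]
  omega

lemma binSum_per30 : ∀ j : ℕ, binSum 4 (j + 30) ≡ binSum 4 j [MOD 4] := by
  intro j
  induction j using Nat.strong_induction_on with
  | _ j ih =>
    match j with
    | 0 => decide
    | 1 => decide
    | 2 => decide
    | 3 => decide
    | (k + 4) =>
      have h1 := ih k (by omega)
      have h2 := ih (k + 3) (by omega)
      have rA : binSum 4 (k + 4 + 30) = binSum 4 (k + 3 + 30) + binSum 4 (k + 30) := by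
        have h := binSum_rec4 (k + 30)
        have e1 : k + 30 + 4 = k + 4 + 30 := by ring
        have e2 : k + 30 + 3 = k + 3 + 30 := by ring
        rw [e1, e2] at h
        exact h
      rw [rA, binSum_rec4 k]
      exact Nat.ModEq.add h2 h1

theorem stmt_14 :
    IsLeast (periodSet 4 4) 30 ∧ 30 = 2 * (2 ^ 4 - 1) := by
  refine ⟨⟨⟨by norm_num, binSum_per30⟩, ?_⟩, rfl⟩
  rintro P ⟨hP, h⟩
  by_contra hlt
  push_neg at hlt
  interval_cases P <;>
    first
      | exact absurd (h 0) (by decide)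
      | exact absurd (h 1) (by decide)
      | exact absurd (h 2) (by decide)
      | exact absurd (h 3) (by decide)
end

section
/- Let d be a prime. For each j in ℤ/d, let T_j : (ℤ/d)^d \to (ℤ/d)^d be the CNOT map that replaces coordinate j+1 (mod d) of its argument x by x_{j+1} + x_j (mod d) and leaves all other coordinates unchanged. Then the composition of the d^2 - 1 maps T_0, T_1, \dots, T_{d-1}, T_0, T_1, \dots applied in this cyclic order (gate number t, for t = 1, \dots, d^2-1, being T_{(t-1) mod d}) equals the cyclic coordinate shift S : (ℤ/d)^d \to (ℤ/d)^d given by (S x)_j = x_{j+1 (mod d)}; i.e. the network sends the input (e_0, e_1, \dots, e_{d-1}) to (e_1, e_2, \dots, e_{d-1}, e_0). -/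
/-!
After `n` gates, coordinate `n + i + 1` (for `i < d`) holds the term `u (n + i)` of the lagged
Fibonacci sequence `u (k + d) = u (k + d - 1) + u k`, `u k = x (k + 1)` for `k < d`. Over `𝔽_d` its
characteristic polynomial `X ^ d - X ^ (d - 1) - 1` divides `X ^ (d ^ 2 - 1) - 1`: a root `r` is a
unit, and `w = r⁻¹` satisfies `w ^ d = 1 - w`, so the Frobenius gives `w ^ d ^ 2 = w`. Hence `u` has
period `d ^ 2 - 1 ≡ -1 (mod d)`, and after that many gates coordinate `j` holds `u j.val = x (j + 1)`.
-/

/-- The CNOT map on `(ℤ/d)^d` with control coordinate `j` and target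
coordinate `j + 1` (mod `d`): it replaces coordinate `j+1` of `x` by
`x (j+1) + x j` and leaves all other coordinates unchanged. -/
def cnot (d : ℕ) (j : ZMod d) (x : ZMod d → ZMod d) : ZMod d → ZMod d :=
  Function.update x (j + 1) (x (j + 1) + x j)

/-- The network consisting of the first `n` gates, applied in the cyclic
order `T_0, T_1, …, T_{d-1}, T_0, T_1, …` (gate number `t` being
`T_{(t-1) mod d}`). -/
def network (d : ℕ) : ℕ → (ZMod d → ZMod d) → (ZMod d → ZMod d)
  | 0, x => x
  | n + 1, x => cnot d (n : ZMod d) (network d n x)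

open Polynomial

theorem pow_sq_sub_one_eq_one_of_pow_eq {R : Type*} [CommRing R] {p : ℕ} [Fact p.Prime]
    [CharP R p] {r : R} (h : r ^ p = r ^ (p - 1) + 1) : r ^ (p ^ 2 - 1) = 1 := by
  have hp : 2 ≤ p := (Fact.out : p.Prime).two_le
  set w := r ^ (p - 1) - r ^ (p - 2)
  have hrw : r * w = 1 := by
    rw [mul_sub, ← pow_succ', ← pow_succ', Nat.sub_add_cancel (by omega),
      show p - 2 + 1 = p - 1 by omega, h, add_sub_cancel_left]
  have hw : w ^ p = 1 - w := by
    have : (r * w) ^ p = (r * w) ^ (p - 1) * w + w ^ p := by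
      rw [mul_pow, h, mul_pow, mul_assoc, pow_sub_one_mul (by omega)]
      ring
    rw [hrw, one_pow, one_pow, one_mul] at this
    linear_combination -this
  have hw2 : w ^ p ^ 2 = w := by
    rw [sq, pow_mul, hw, sub_pow_char, one_pow, hw, sub_sub_cancel]
  calc r ^ (p ^ 2 - 1) = r ^ (p ^ 2 - 1) * (r * w) := by rw [hrw, mul_one]
    _ = (r * w) ^ p ^ 2 := by
      rw [mul_pow, hw2, ← mul_assoc, ← pow_succ,
        Nat.sub_add_cancel (Nat.one_le_pow _ _ (by omega))]
    _ = 1 := by rw [hrw, one_pow]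

theorem X_pow_sub_X_pow_sub_one_dvd (p : ℕ) [Fact p.Prime] :
    (X ^ p - X ^ (p - 1) - 1 : (ZMod p)[X]) ∣ X ^ (p ^ 2 - 1) - 1 := by
  rw [← AdjoinRoot.mk_eq_zero]
  set f : (ZMod p)[X] := X ^ p - X ^ (p - 1) - 1
  nontriviality
  have : CharP (AdjoinRoot f) p := charP_of_injective_algebraMap' (ZMod p) p
  have hroot : AdjoinRoot.root f ^ p = AdjoinRoot.root f ^ (p - 1) + 1 := by
    have := AdjoinRoot.mk_self (f := f)
    simp only [f, map_sub, map_pow, AdjoinRoot.mk_X, map_one] at this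
    linear_combination this
  simp [pow_sq_sub_one_eq_one_of_pow_eq hroot]

section SeqShift

variable (R : Type*) [CommRing R]

abbrev seqShift : Module.End R (ℕ → R) := LinearMap.funLeft R R (· + 1)

variable {R}

theorem seqShift_pow_apply (n : ℕ) (u : ℕ → R) (k : ℕ) : (seqShift R ^ n) u k = u (k + n) := by
  induction n generalizing k with
  | zero => rfl
  | succ n ih =>
    rw [pow_succ', Module.End.mul_apply, LinearMap.funLeft_apply, ih, add_assoc, add_comm 1]

theorem periodic_of_aeval_seqShift_eq_zero {f : R[X]} {N : ℕ} {u : ℕ → R}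
    (hu : aeval (seqShift R) f u = 0) (hf : f ∣ X ^ N - 1) : Function.Periodic u N := by
  obtain ⟨q, hq⟩ := hf
  have h : aeval (seqShift R) (X ^ N - 1 : R[X]) u = 0 := by
    rw [hq, mul_comm, map_mul, Module.End.mul_apply, hu, map_zero]
  intro k
  simpa [seqShift_pow_apply, sub_eq_zero] using congrFun h k

end SeqShift

-- The guard `0 < d` only serves termination: `laggedFib 0 a = a`.
def laggedFib {M : Type*} [Add M] (d : ℕ) (a : ℕ → M) (k : ℕ) : M :=
  if 0 < d ∧ d ≤ k then laggedFib d a (k - 1) + laggedFib d a (k - d) else a k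
termination_by k
decreasing_by all_goals omega

section LaggedFib

variable {M : Type*} [Add M] {d : ℕ} (a : ℕ → M)

theorem laggedFib_of_lt {k : ℕ} (hk : k < d) : laggedFib d a k = a k := by
  rw [laggedFib, if_neg (by omega)]

theorem laggedFib_add (hd : 0 < d) (k : ℕ) :
    laggedFib d a (k + d) = laggedFib d a (k + (d - 1)) + laggedFib d a k := by
  rw [laggedFib, if_pos (by omega), show k + d - 1 = k + (d - 1) by omega, Nat.add_sub_cancel]

end LaggedFib

theorem aeval_seqShift_laggedFib {R : Type*} [CommRing R] {d : ℕ} (hd : 0 < d) (a : ℕ → R) :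
    aeval (seqShift R) (X ^ d - X ^ (d - 1) - 1 : R[X]) (laggedFib d a) = 0 := by
  funext k
  simp [seqShift_pow_apply, laggedFib_add a hd]

theorem network_apply_natCast_add_one {d : ℕ} [NeZero d] (x : ZMod d → ZMod d) (n : ℕ) {i : ℕ}
    (hi : i < d) :
    network d n x ((n + i : ℕ) + 1) = laggedFib d (fun k ↦ x (k + 1)) (n + i) := by
  induction n generalizing i with
  | zero => simp [network, laggedFib_of_lt _ hi]
  | succ n ih =>
    have hd : 0 < d := NeZero.pos d
    simp only [network, cnot]
    by_cases hi' : i + 1 < d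
    · have hne : ((n + 1 + i : ℕ) + 1 : ZMod d) ≠ (n : ZMod d) + 1 := by
        intro h
        have : ((i + 1 : ℕ) : ZMod d) = 0 := by push_cast at h ⊢; linear_combination h
        rw [ZMod.natCast_eq_zero_iff] at this
        exact absurd (Nat.le_of_dvd (by omega) this) (by omega)
      rw [Function.update_of_ne hne, show n + 1 + i = n + (i + 1) by omega, ih hi']
    · obtain rfl : i = d - 1 := by omega
      have hlast : ((n + (d - 1) : ℕ) + 1 : ZMod d) = n := by
        rw [Nat.cast_add, Nat.cast_sub hd, ZMod.natCast_self]; ring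
      have htarget : ((n + 1 + (d - 1) : ℕ) + 1 : ZMod d) = (n : ZMod d) + 1 := by
        rw [show n + 1 + (d - 1) = n + (d - 1) + 1 by omega, Nat.cast_succ, hlast]
      have hfirst := ih hd
      rw [add_zero] at hfirst
      have hprev := ih (Nat.sub_lt hd one_pos)
      rw [hlast] at hprev
      rw [htarget, Function.update_self, hfirst, hprev, show n + 1 + (d - 1) = n + d by omega,
        laggedFib_add _ hd, add_comm]

theorem stmt_16 (d : ℕ) (hd : d.Prime) :
    ∀ x : ZMod d → ZMod d, network d (d ^ 2 - 1) x = fun j => x (j + 1) := by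
  have : Fact d.Prime := ⟨hd⟩
  intro x
  funext j
  have hN : ((d ^ 2 - 1 : ℕ) : ZMod d) = -1 := by
    rw [Nat.cast_sub (Nat.one_le_pow _ _ hd.pos), Nat.cast_pow, ZMod.natCast_self]
    ring
  have hperiodic := periodic_of_aeval_seqShift_eq_zero
    (aeval_seqShift_laggedFib hd.pos fun k ↦ x (k + 1)) (X_pow_sub_X_pow_sub_one_dvd d)
  calc network d (d ^ 2 - 1) x j = network d (d ^ 2 - 1) x ((d ^ 2 - 1 + j.val : ℕ) + 1) := by
        rw [Nat.cast_add, hN, ZMod.natCast_val, ZMod.cast_id', id, neg_add_cancel_comm]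
    _ = x (j + 1) := by
        rw [network_apply_natCast_add_one x _ j.val_lt, add_comm, hperiodic,
          laggedFib_of_lt _ j.val_lt, ZMod.natCast_zmod_val]
end

section
/- For d = 3, let T_j : (ℤ/3)^3 \to (ℤ/3)^3 (j = 0, 1, 2) be the CNOT map that replaces coordinate j+1 (mod 3) of x by x_{j+1} + x_j (mod 3) and leaves the other coordinates unchanged. Then the composition of the eight maps T_0, T_1, T_2, T_0, T_1, T_2, T_0, T_1 applied in this order equals the cyclic shift sending (e_0, e_1, e_2) to (e_1, e_2, e_0); i.e. eight CNOT gates suffice to implement the qutrit SWAP gate. -/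
def triple (a b c : ZMod 3) : ZMod 3 → ZMod 3 :=
  fun k => if k = 0 then a else if k = 1 then b else c

theorem eq_triple (x : ZMod 3 → ZMod 3) : x = triple (x 0) (x 1) (x 2) := by
  funext k; fin_cases k <;> rfl

theorem cnot_zero_triple (a b c : ZMod 3) : cnot 3 0 (triple a b c) = triple a (b + a) c := by
  funext k; fin_cases k <;> rfl

theorem cnot_one_triple (a b c : ZMod 3) : cnot 3 1 (triple a b c) = triple a b (c + b) := by
  funext k; fin_cases k <;> rfl

theorem cnot_two_triple (a b c : ZMod 3) : cnot 3 2 (triple a b c) = triple (a + c) b c := by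
  funext k; fin_cases k <;> rfl

theorem triple_comp_add_one (a b c : ZMod 3) :
    (fun k => triple a b c (k + 1)) = triple b c a := by
  funext k; fin_cases k <;> rfl

theorem stmt_17 :
    ∀ x : ZMod 3 → ZMod 3,
      cnot 3 1 (cnot 3 0 (cnot 3 2 (cnot 3 1 (cnot 3 0
        (cnot 3 2 (cnot 3 1 (cnot 3 0 x))))))) = fun j => x (j + 1) := by
  intro x
  rw [eq_triple x, triple_comp_add_one, cnot_zero_triple, cnot_one_triple, cnot_two_triple,
    cnot_zero_triple, cnot_one_triple, cnot_two_triple, cnot_zero_triple, cnot_one_triple]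
  congr 1 <;> ring_nf <;> reduce_mod_char
end

section
/- For d = 6, let T_j : (ℤ/6)^6 \to (ℤ/6)^6 (j \in ℤ/6) be the CNOT map that replaces coordinate j+1 (mod 6) of x by x_{j+1} + x_j (mod 6) and leaves the other coordinates unchanged. Then the composition of 6552 such gates applied in the cyclic order T_0, T_1, \dots, T_5, T_0, T_1, \dots (gate number t being T_{(t-1) mod 6}) equals the identity map on (ℤ/6)^6; i.e. one full cycle of the network acts trivially on the six 6-dimensional systems. -/
/-- gate matrix -/
def Tm (j : ZMod 6) : Matrix (ZMod 6) (ZMod 6) (ZMod 6) :=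
  Matrix.of fun i k => (if i = k then 1 else 0) + (if i = j + 1 ∧ k = j then 1 else 0)

def Pmat : ℕ → Matrix (ZMod 6) (ZMod 6) (ZMod 6)
  | 0 => 1
  | n + 1 => Tm (n : ZMod 6) * Pmat n

lemma step (j : ZMod 6) (y : ZMod 6 → ZMod 6) : cnot 6 j y = (Tm j).mulVec y := by
  funext i
  simp only [cnot, Tm, Matrix.mulVec, dotProduct, Matrix.of_apply, add_mul, ite_mul,
    one_mul, zero_mul, Finset.sum_add_distrib, Finset.sum_ite_eq, Finset.mem_univ, if_true,
    ite_and]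
  by_cases h : i = j + 1 <;>
    simp [Function.update, h, Finset.sum_ite_eq', add_comm]

lemma netP (n : ℕ) (x : ZMod 6 → ZMod 6) : network 6 n x = (Pmat n).mulVec x := by
  induction n with
  | zero => simp [network, Pmat, Matrix.one_mulVec]
  | succ n ih => rw [network, ih, step, Pmat, Matrix.mulVec_mulVec]

lemma cast6 (m k : ℕ) : ((6 * m + k : ℕ) : ZMod 6) = (k : ZMod 6) := by
  push_cast
  simp [show (6 : ZMod 6) = 0 by decide]

lemma cycle (m : ℕ) : Pmat (6 * m + 6) = Pmat 6 * Pmat (6 * m) := by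
  have h6 : Pmat 6 = Tm 5 * (Tm 4 * (Tm 3 * (Tm 2 * (Tm 1 * (Tm 0 * 1))))) := by
    show Pmat (0+1+1+1+1+1+1) = _
    simp only [Pmat]
    norm_num
  have e : 6 * m + 6 = 6 * m + 1 + 1 + 1 + 1 + 1 + 1 := by ring
  rw [e]
  simp only [Pmat, cast6, h6]
  push_cast
  simp [show (6 : ZMod 6) = 0 by decide, mul_assoc]

lemma pmat_pow (m : ℕ) : Pmat (6 * m) = Pmat 6 ^ m := by
  induction m with
  | zero => simp [Pmat]
  | succ m ih =>
      have : 6 * (m + 1) = 6 * m + 6 := by ring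
      rw [this, cycle, ih, pow_succ']

def M4 : Matrix (ZMod 6) (ZMod 6) (ZMod 6) :=
  !![4, 3, 5, 2, 5, 1; 1, 1, 4, 3, 3, 4; 5, 1, 1, 4, 3, 3; 2, 5, 1, 1, 4, 3; 5, 2, 5, 1, 1, 4; 3, 5, 2, 5, 1, 1]
def M12 : Matrix (ZMod 6) (ZMod 6) (ZMod 6) :=
  !![5, 0, 1, 0, 5, 3; 3, 5, 5, 1, 1, 2; 5, 3, 5, 5, 1, 1; 0, 5, 3, 5, 5, 1; 1, 0, 5, 3, 5, 5; 0, 1, 0, 5, 3, 5]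
def M84 : Matrix (ZMod 6) (ZMod 6) (ZMod 6) :=
  !![3, 4, 4, 2, 0, 4; 4, 5, 0, 2, 2, 2; 0, 4, 5, 0, 2, 2; 2, 0, 4, 5, 0, 2; 4, 2, 0, 4, 5, 0; 4, 4, 2, 0, 4, 5]

lemma p4 : Pmat 6 ^ 4 = M4 := by decide
lemma p12 : M4 ^ 3 = M12 := by decide
lemma p84 : M12 ^ 7 = M84 := by decide
lemma p1092 : M84 ^ 13 = 1 := by decide

theorem stmt_19 : ∀ x : ZMod 6 → ZMod 6, network 6 6552 x = x := by
  intro x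
  have h : Pmat 6552 = 1 := by
    have : (6552 : ℕ) = 6 * 1092 := by norm_num
    rw [this, pmat_pow, show (1092 : ℕ) = 4 * (3 * (7 * 13)) by norm_num,
      pow_mul, pow_mul, pow_mul, p4, p12, p84, p1092]
  rw [netP, h, Matrix.one_mulVec]
end
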